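/- arXiv:1206.1245 — 3 statements merged into one kernel-verified Lean document; each statement's English description precedes it below -/
import Mathlib

section
/- Cohomological equation in odd degree: Let α₁,…,αₙ ∈ ℂ be linearly independent over ℚ and set H₀ = Σᵢ₌₁ⁿ αᵢ·pᵢqᵢ ∈ ℂ[q,p]. Then for every homogeneous polynomial R ∈ ℂ[q₁,…,qₙ,p₁,…,pₙ] of odd total degree d there exists a unique homogeneous polynomial f of degree d with {H₀, f} = R. -/
/- ℂ[q,p] is `MvPolynomial (Fin n ⊕ Fin n) ℂ`, where `Sum.inl i` is the
variable `qᵢ` and `Sum.inr i` is the variable `pᵢ`. -/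

open MvPolynomial

/-- The Poisson bracket `{f,g} = Σᵢ ∂_{qᵢ}f ∂_{pᵢ}g − ∂_{pᵢ}f ∂_{qᵢ}g` on ℂ[q,p]. -/
noncomputable def poisP {n : ℕ} (f g : MvPolynomial (Fin n ⊕ Fin n) ℂ) :
    MvPolynomial (Fin n ⊕ Fin n) ℂ :=
  ∑ i : Fin n, (pderiv (Sum.inl i) f * pderiv (Sum.inr i) g -
    pderiv (Sum.inr i) f * pderiv (Sum.inl i) g)

/-- `H₀ = Σᵢ αᵢ pᵢ qᵢ`. -/
noncomputable def Hzero {n : ℕ} (α : Fin n → ℂ) : MvPolynomial (Fin n ⊕ Fin n) ℂ :=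
  ∑ i : Fin n, MvPolynomial.C (α i) * X (Sum.inr i) * X (Sum.inl i)

/-- The eigenvalue of `{H₀, ·}` on the monomial with exponents `m`. -/
noncomputable def lamP {n : ℕ} (α : Fin n → ℂ) (m : (Fin n ⊕ Fin n) →₀ ℕ) : ℂ :=
  ∑ i : Fin n, α i * ((m (Sum.inr i) : ℂ) - (m (Sum.inl i) : ℂ))

lemma pderiv_Hzero_inl {n : ℕ} (α : Fin n → ℂ) (k : Fin n) :
    pderiv (Sum.inl k) (Hzero α) = C (α k) * X (Sum.inr k) := by
  classical
  rw [Hzero, map_sum, Finset.sum_eq_single k]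
  · simp [pderiv_mul, pderiv_X, Pi.single_apply]
    try ring
  · intro i _ hik
    simp [pderiv_mul, pderiv_X, Pi.single_apply, Sum.inl.injEq, hik]
  · simp

lemma pderiv_Hzero_inr {n : ℕ} (α : Fin n → ℂ) (k : Fin n) :
    pderiv (Sum.inr k) (Hzero α) = C (α k) * X (Sum.inl k) := by
  classical
  rw [Hzero, map_sum, Finset.sum_eq_single k]
  · simp [pderiv_mul, pderiv_X, Pi.single_apply]
    try ring
  · intro i _ hik
    simp [pderiv_mul, pderiv_X, Pi.single_apply, Sum.inr.injEq, hik]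
  · simp

lemma X_mul_pderiv_monomial {n : ℕ} (j : Fin n ⊕ Fin n)
    (m : (Fin n ⊕ Fin n) →₀ ℕ) (c : ℂ) :
    X j * pderiv j (monomial m c) = (m j : ℂ) • monomial m c := by
  classical
  rw [pderiv_monomial, X, monomial_mul]
  by_cases h : m j = 0
  · simp [h]
  · have hm : Finsupp.single j 1 + (m - Finsupp.single j 1) = m := by
      ext a
      simp only [Finsupp.add_apply, Finsupp.tsub_apply, Finsupp.single_apply]
      rcases eq_or_ne j a with rfl | hne
      · simp only [eq_self_iff_true, if_true]
        omega
      · simp [hne]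
    rw [hm, smul_monomial]
    congr 1
    rw [smul_eq_mul]
    ring

lemma pois_monomial {n : ℕ} (α : Fin n → ℂ) (m : (Fin n ⊕ Fin n) →₀ ℕ) (c : ℂ) :
    poisP (Hzero α) (monomial m c) = lamP α m • monomial m c := by
  classical
  rw [poisP, lamP, Finset.sum_smul]
  refine Finset.sum_congr rfl fun i _ => ?_
  rw [pderiv_Hzero_inl, pderiv_Hzero_inr]
  have h1 := X_mul_pderiv_monomial (Sum.inr i) m c
  have h2 := X_mul_pderiv_monomial (Sum.inl i) m c
  calc C (α i) * X (Sum.inr i) * pderiv (Sum.inr i) (monomial m c) -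
        C (α i) * X (Sum.inl i) * pderiv (Sum.inl i) (monomial m c)
      = C (α i) * (X (Sum.inr i) * pderiv (Sum.inr i) (monomial m c)) -
        C (α i) * (X (Sum.inl i) * pderiv (Sum.inl i) (monomial m c)) := by ring
    _ = C (α i) * ((m (Sum.inr i) : ℂ) • monomial m c) -
        C (α i) * ((m (Sum.inl i) : ℂ) • monomial m c) := by rw [h1, h2]
    _ = (α i * ((m (Sum.inr i) : ℂ) - (m (Sum.inl i) : ℂ))) • monomial m c := by
        rw [smul_monomial, smul_monomial, smul_monomial, mul_comm, C_mul_monomial,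
          mul_comm, C_mul_monomial, ← map_sub]
        congr 1
        simp only [smul_eq_mul]
        ring

lemma poisP_sum {n : ℕ} (H : MvPolynomial (Fin n ⊕ Fin n) ℂ) {ι : Type*}
    (s : Finset ι) (g : ι → MvPolynomial (Fin n ⊕ Fin n) ℂ) :
    poisP H (∑ x ∈ s, g x) = ∑ x ∈ s, poisP H (g x) := by
  unfold poisP
  rw [Finset.sum_comm]
  refine Finset.sum_congr rfl fun i _ => ?_
  simp [map_sum, Finset.mul_sum, Finset.sum_sub_distrib]

lemma coeff_pois {n : ℕ} (α : Fin n → ℂ) (f : MvPolynomial (Fin n ⊕ Fin n) ℂ)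
    (m : (Fin n ⊕ Fin n) →₀ ℕ) :
    coeff m (poisP (Hzero α) f) = lamP α m * coeff m f := by
  classical
  conv_lhs => rw [f.as_sum, poisP_sum]
  rw [coeff_sum]
  by_cases hm : m ∈ f.support
  · rw [Finset.sum_eq_single m]
    · rw [pois_monomial, coeff_smul, coeff_monomial, if_pos rfl, smul_eq_mul]
    · intro b _ hb
      rw [pois_monomial, coeff_smul, coeff_monomial, if_neg hb, smul_zero]
    · intro h; exact absurd hm h
  · rw [Finset.sum_eq_zero, MvPolynomial.notMem_support_iff.mp hm, mul_zero]
    intro b hb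
    have hbm : b ≠ m := fun h => hm (h ▸ hb)
    rw [pois_monomial, coeff_smul, coeff_monomial, if_neg hbm, smul_zero]

lemma lamP_ne_zero {n : ℕ} {α : Fin n → ℂ} (hα : LinearIndependent ℚ α)
    {d : ℕ} (hd : Odd d) {m : (Fin n ⊕ Fin n) →₀ ℕ}
    (hm : Finsupp.degree m = d) : lamP α m ≠ 0 := by
  classical
  intro h0
  have hdeg : ∑ j : Fin n ⊕ Fin n, m j = d := by
    rw [← hm, Finsupp.degree]
    exact (Finset.sum_subset (Finset.subset_univ _)
      (fun x _ hx => Finsupp.notMem_support_iff.mp hx)).symm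
  set c : Fin n → ℚ := fun i => (m (Sum.inr i) : ℚ) - (m (Sum.inl i) : ℚ) with hc
  have hsum : ∑ i : Fin n, c i • α i = 0 := by
    rw [← h0, lamP]
    refine Finset.sum_congr rfl fun i _ => ?_
    rw [Rat.smul_def, hc]
    push_cast
    ring
  have hz := Fintype.linearIndependent_iff.mp hα c hsum
  have heq : ∀ i, m (Sum.inr i) = m (Sum.inl i) := by
    intro i
    have h' : (m (Sum.inr i) : ℚ) - (m (Sum.inl i) : ℚ) = 0 := hz i
    exact_mod_cast sub_eq_zero.mp h'
  have hdd : d = 2 * ∑ i : Fin n, m (Sum.inl i) := by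
    rw [← hdeg, Fintype.sum_sum_type]
    rw [Finset.sum_congr rfl (fun i _ => heq i)]
    ring
  exact (Nat.not_even_iff_odd.mpr hd) ⟨∑ i : Fin n, m (Sum.inl i), by omega⟩

/-- **Cohomological equation in odd degree.**
If `α₁,…,αₙ` are linearly independent over ℚ, then for every homogeneous
polynomial `R` of odd total degree `d` there is a unique homogeneous polynomial
`f` of degree `d` with `{H₀, f} = R`. -/
theorem cohomological_equation_odd (n : ℕ) (α : Fin n → ℂ)
    (hα : LinearIndependent ℚ α)
    (d : ℕ) (hd : Odd d)
    (R : MvPolynomial (Fin n ⊕ Fin n) ℂ) (hR : R.IsHomogeneous d) :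
    ∃! f : MvPolynomial (Fin n ⊕ Fin n) ℂ,
      f.IsHomogeneous d ∧ poisP (Hzero α) f = R := by
  classical
  have hdegR : ∀ m ∈ R.support, Finsupp.degree m = d := by
    intro m hm
    by_contra h
    exact (MvPolynomial.mem_support_iff.mp hm) (hR.coeff_eq_zero h)
  set f : MvPolynomial (Fin n ⊕ Fin n) ℂ :=
    ∑ m ∈ R.support, monomial m (coeff m R / lamP α m) with hf
  have hcf : ∀ m, coeff m f = if m ∈ R.support then coeff m R / lamP α m else 0 := by
    intro m
    rw [hf, coeff_sum]
    by_cases hm : m ∈ R.support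
    · rw [if_pos hm, Finset.sum_eq_single m]
      · rw [coeff_monomial, if_pos rfl]
      · intro b _ hb; rw [coeff_monomial, if_neg hb]
      · intro h; exact absurd hm h
    · rw [if_neg hm, Finset.sum_eq_zero]
      intro b hb
      rw [coeff_monomial, if_neg (show b ≠ m from fun h => hm (h ▸ hb))]
  have hfhom : f.IsHomogeneous d := by
    rw [hf]
    exact IsHomogeneous.sum _ _ _ fun m hm => isHomogeneous_monomial _ (hdegR m hm)
  have hfeq : poisP (Hzero α) f = R := by
    ext m
    rw [coeff_pois, hcf]
    by_cases hm : m ∈ R.support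
    · rw [if_pos hm]
      have hne := lamP_ne_zero hα hd (hdegR m hm)
      field_simp
    · rw [if_neg hm, mul_zero, MvPolynomial.notMem_support_iff.mp hm]
  refine ⟨f, ⟨hfhom, hfeq⟩, ?_⟩
  rintro g ⟨hghom, hgeq⟩
  ext m
  have h1 : lamP α m * coeff m g = coeff m R := by rw [← coeff_pois, hgeq]
  have h2 : lamP α m * coeff m f = coeff m R := by rw [← coeff_pois, hfeq]
  by_cases hg0 : coeff m g = 0
  · by_cases hf0 : coeff m f = 0
    · rw [hg0, hf0]
    · have hdm : Finsupp.degree m = d := by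
        by_contra h
        exact hf0 (hfhom.coeff_eq_zero h)
      have hne := lamP_ne_zero hα hd hdm
      exact mul_left_cancel₀ hne (h1.trans h2.symm)
  · have hdm : Finsupp.degree m = d := by
      by_contra h
      exact hg0 (hghom.coeff_eq_zero h)
    have hne := lamP_ne_zero hα hd hdm
    exact mul_left_cancel₀ hne (h1.trans h2.symm)
end

section
/- Kernel of the adjoint operator: Let α₁,…,αₙ ∈ ℂ be linearly independent over ℚ and set H₀ = Σᵢ₌₁ⁿ αᵢ·pᵢqᵢ. Then for f ∈ ℂ[[q,p]] one has {H₀, f} = 0 if and only if f lies in the closed subalgebra of formal power series in the n products q₁p₁,…,qₙpₙ, i.e. f = P(q₁p₁,…,qₙpₙ) for some P ∈ ℂ[[X₁,…,Xₙ]]. -/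
/-!
Each monomial `q^I p^J` is an eigenvector of `{H₀, ·}`: the bracket is `Σᵢ αᵢ (pᵢ∂_{pᵢ} − qᵢ∂_{qᵢ})`,
so it multiplies `q^I p^J` by the weight `Σᵢ αᵢ (Jᵢ − Iᵢ)`. Hence `{H₀, f} = 0` iff `f` is
supported on monomials of weight zero, and since the `αᵢ` are independent over `ℚ` these are exactly
the monomials with `I = J`, i.e. the powers of the products `qᵢpᵢ`.
-/

/- ℂ[[q,p]] is `MvPowerSeries (Fin n ⊕ Fin n) ℂ`, where `Sum.inl i` is the
variable `qᵢ` and `Sum.inr i` is the variable `pᵢ`. -/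

open MvPowerSeries

/-- Partial derivative of a multivariate formal power series. -/
noncomputable def pd {σ : Type} [DecidableEq σ] (x : σ) (f : MvPowerSeries σ ℂ) :
    MvPowerSeries σ ℂ :=
  fun m => ((m x : ℂ) + 1) * coeff (R := ℂ) (m + Finsupp.single x 1) f

/-- The Poisson bracket `{f,g} = Σᵢ ∂_{qᵢ}f ∂_{pᵢ}g − ∂_{pᵢ}f ∂_{qᵢ}g` on ℂ[[q,p]]. -/
noncomputable def pois {n : ℕ} (f g : MvPowerSeries (Fin n ⊕ Fin n) ℂ) :
    MvPowerSeries (Fin n ⊕ Fin n) ℂ :=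
  ∑ i : Fin n, (pd (Sum.inl i) f * pd (Sum.inr i) g - pd (Sum.inr i) f * pd (Sum.inl i) g)

/-- Total degree of a monomial. -/
def mdeg {σ : Type} (m : σ →₀ ℕ) : ℕ := m.sum fun _ k => k

/-- `f = g + o(l)`: every monomial of `f − g` has total degree > `l`. -/
def OEq {σ : Type} (f g : MvPowerSeries σ ℂ) (l : ℕ) : Prop :=
  ∀ m, mdeg m ≤ l → coeff (R := ℂ) m (f - g) = 0

/-- `f` has order ≥ `a`: every monomial of `f` has total degree ≥ `a`. -/
def OrdGe {σ : Type} (f : MvPowerSeries σ ℂ) (a : ℕ) : Prop :=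
  ∀ m, mdeg m < a → coeff (R := ℂ) m f = 0

/-- Substitution `P(q₁p₁,…,qₙpₙ)` of the products `qᵢpᵢ` into a formal power series
`P ∈ ℂ[[X₁,…,Xₙ]]`: since `P(q₁p₁,…,qₙpₙ) = Σ_d (coeff_d P) q^d p^d`, its coefficient
on a monomial `q^I p^J` equals `coeff_I P` if `I = J` and `0` otherwise. -/
noncomputable def substQP {n : ℕ} (P : MvPowerSeries (Fin n) ℂ) :
    MvPowerSeries (Fin n ⊕ Fin n) ℂ :=
  fun m => if ∀ i : Fin n, m (Sum.inl i) = m (Sum.inr i) then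
    coeff (R := ℂ) (Finsupp.comapDomain Sum.inl m Sum.inl_injective.injOn) P else 0

lemma C_mul_X_mul_X {σ : Type} (a : ℂ) (y z : σ) :
    C a * X y * X z = monomial (Finsupp.single y 1 + Finsupp.single z 1) a := by
  rw [X, X, ← monomial_zero_eq_C_apply, monomial_mul_monomial, monomial_mul_monomial, zero_add,
    mul_one, mul_one]

section Derivative

variable {σ : Type} [DecidableEq σ]

lemma coeff_pd (x : σ) (f : MvPowerSeries σ ℂ) (m : σ →₀ ℕ) :
    coeff m (pd x f) = ((m x : ℂ) + 1) * coeff (m + Finsupp.single x 1) f :=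
  rfl

lemma pd_sum {ι : Type} (s : Finset ι) (x : σ) (f : ι → MvPowerSeries σ ℂ) :
    pd x (∑ j ∈ s, f j) = ∑ j ∈ s, pd x (f j) := by
  ext m
  simp only [coeff_pd, map_sum, Finset.mul_sum]

lemma pd_monomial (x : σ) (μ : σ →₀ ℕ) (a : ℂ) :
    pd x (monomial μ a) = monomial (μ - Finsupp.single x 1) ((μ x : ℂ) * a) := by
  ext m
  rw [coeff_pd, coeff_monomial, coeff_monomial]
  rcases Nat.eq_zero_or_pos (μ x) with hμx | hμx
  · have hne : m + Finsupp.single x 1 ≠ μ := fun h => by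
      simpa [hμx] using DFunLike.congr_fun h x
    simp [hne, hμx]
  · have hle : Finsupp.single x 1 ≤ μ := Finsupp.single_le_iff.mpr hμx
    by_cases hm : m = μ - Finsupp.single x 1
    · have hμ : m + Finsupp.single x 1 = μ := by rw [hm, tsub_add_cancel_of_le hle]
      have hmx : (μ x : ℂ) = m x + 1 := by
        rw [← hμ, Finsupp.add_apply, Finsupp.single_eq_same, Nat.cast_add, Nat.cast_one]
      rw [if_pos hμ, if_pos hm, hmx]
    · have hμ : m + Finsupp.single x 1 ≠ μ := fun h => hm (eq_tsub_of_add_eq h)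
      rw [if_neg hμ, if_neg hm, mul_zero]

lemma coeff_monomial_single_mul_pd (x : σ) (a : ℂ) (f : MvPowerSeries σ ℂ) (m : σ →₀ ℕ) :
    coeff m (monomial (Finsupp.single x 1) a * pd x f) = a * (m x : ℂ) * coeff m f := by
  rw [coeff_monomial_mul]
  split_ifs with hle
  · have hmx : ((m - Finsupp.single x 1 : σ →₀ ℕ) x : ℂ) + 1 = m x := by
      rw [Finsupp.tsub_apply, Finsupp.single_eq_same,
        Nat.cast_sub (Finsupp.single_le_iff.mp hle), Nat.cast_one, sub_add_cancel]
    rw [coeff_pd, tsub_add_cancel_of_le hle, hmx, mul_assoc]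
  · have hmx : m x = 0 := by
      by_contra hmx
      exact hle (Finsupp.single_le_iff.mpr (Nat.pos_of_ne_zero hmx))
    simp [hmx]

end Derivative

section QuadraticHamiltonian

variable {n : ℕ}

/-- `H₀ = Σᵢ αᵢ pᵢqᵢ`. -/
noncomputable def quadraticHamiltonian (α : Fin n → ℂ) : MvPowerSeries (Fin n ⊕ Fin n) ℂ :=
  ∑ i : Fin n, C (α i) * X (Sum.inr i) * X (Sum.inl i)

lemma pd_inl_quadraticHamiltonian (α : Fin n → ℂ) (i : Fin n) :
    pd (Sum.inl i) (quadraticHamiltonian α) = monomial (Finsupp.single (Sum.inr i) 1) (α i) := by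
  simp only [quadraticHamiltonian, pd_sum, C_mul_X_mul_X, pd_monomial]
  simp [Finsupp.single_apply, apply_ite (monomial _), add_tsub_cancel_right]

lemma pd_inr_quadraticHamiltonian (α : Fin n → ℂ) (i : Fin n) :
    pd (Sum.inr i) (quadraticHamiltonian α) = monomial (Finsupp.single (Sum.inl i) 1) (α i) := by
  simp only [quadraticHamiltonian, pd_sum, C_mul_X_mul_X, pd_monomial]
  simp [Finsupp.single_apply, apply_ite (monomial _), add_tsub_cancel_left]

/-- The weight `Σᵢ αᵢ (Jᵢ − Iᵢ)` of the monomial `q^I p^J`. -/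
def weight (α : Fin n → ℂ) (m : (Fin n ⊕ Fin n) →₀ ℕ) : ℂ :=
  ∑ i : Fin n, α i * ((m (Sum.inr i) : ℂ) - m (Sum.inl i))

lemma coeff_pois_quadraticHamiltonian (α : Fin n → ℂ) (f : MvPowerSeries (Fin n ⊕ Fin n) ℂ)
    (m : (Fin n ⊕ Fin n) →₀ ℕ) :
    coeff m (pois (quadraticHamiltonian α) f) = weight α m * coeff m f := by
  simp only [pois, map_sum, map_sub, pd_inl_quadraticHamiltonian, pd_inr_quadraticHamiltonian,
    coeff_monomial_single_mul_pd, weight, Finset.sum_mul]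
  exact Finset.sum_congr rfl fun i _ => by ring

lemma weight_eq_zero_iff {α : Fin n → ℂ} (hα : LinearIndependent ℚ α)
    (m : (Fin n ⊕ Fin n) →₀ ℕ) :
    weight α m = 0 ↔ ∀ i, m (Sum.inl i) = m (Sum.inr i) := by
  constructor
  · intro h i
    have hsum : ∑ j, ((m (Sum.inr j) : ℚ) - m (Sum.inl j)) • α j = 0 := by
      rw [← h, weight]
      refine Finset.sum_congr rfl fun j _ => ?_
      rw [Rat.smul_def]
      push_cast
      ring
    have hi := sub_eq_zero.mp (Fintype.linearIndependent_iff.mp hα _ hsum i)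
    exact_mod_cast hi.symm
  · intro h
    exact Finset.sum_eq_zero fun i _ => by rw [h i, sub_self, mul_zero]

lemma coeff_substQP (P : MvPowerSeries (Fin n) ℂ) (m : (Fin n ⊕ Fin n) →₀ ℕ) :
    coeff m (substQP P) = if ∀ i : Fin n, m (Sum.inl i) = m (Sum.inr i) then
      coeff (Finsupp.comapDomain Sum.inl m Sum.inl_injective.injOn) P else 0 :=
  rfl

lemma sumElim_comapDomain_inl {m : (Fin n ⊕ Fin n) →₀ ℕ}
    (hm : ∀ i, m (Sum.inl i) = m (Sum.inr i)) :
    Finsupp.sumElim (Finsupp.comapDomain Sum.inl m Sum.inl_injective.injOn)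
      (Finsupp.comapDomain Sum.inl m Sum.inl_injective.injOn) = m := by
  ext (i | i) <;> simp [hm]

lemma exists_eq_substQP_iff (f : MvPowerSeries (Fin n ⊕ Fin n) ℂ) :
    (∃ P, f = substQP P) ↔ ∀ m, coeff m f ≠ 0 → ∀ i, m (Sum.inl i) = m (Sum.inr i) := by
  constructor
  · rintro ⟨P, rfl⟩ m hm
    by_contra hdiag
    exact hm (by rw [coeff_substQP, if_neg hdiag])
  · intro hf
    let P : MvPowerSeries (Fin n) ℂ := fun d => coeff (Finsupp.sumElim d d) f
    refine ⟨P, MvPowerSeries.ext fun m => ?_⟩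
    rw [coeff_substQP]
    split_ifs with hdiag
    · exact congrArg (coeff · f) (sumElim_comapDomain_inl hdiag).symm
    · exact not_imp_comm.mp (hf m) hdiag

end QuadraticHamiltonian

/-- **Kernel of the adjoint operator.** For `α₁,…,αₙ` linearly independent over ℚ and
`H₀ = Σᵢ αᵢ pᵢqᵢ`, a formal power series `f ∈ ℂ[[q,p]]` satisfies `{H₀, f} = 0` iff
`f = P(q₁p₁,…,qₙpₙ)` for some formal power series `P ∈ ℂ[[X₁,…,Xₙ]]`. -/
theorem kernel_adjoint (n : ℕ) (α : Fin n → ℂ) (hα : LinearIndependent ℚ α)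
    (f : MvPowerSeries (Fin n ⊕ Fin n) ℂ) :
    pois (∑ i : Fin n, C (σ := Fin n ⊕ Fin n) (R := ℂ) (α i) * X (Sum.inr i) * X (Sum.inl i)) f = 0 ↔
    ∃ P : MvPowerSeries (Fin n) ℂ, f = substQP P := by
  change pois (quadraticHamiltonian α) f = 0 ↔ _
  rw [exists_eq_substQP_iff, MvPowerSeries.ext_iff]
  simp only [coeff_pois_quadraticHamiltonian, map_zero, mul_eq_zero, weight_eq_zero_iff hα,
    or_iff_not_imp_right, ne_eq]
end

section
/- First normalization step: let α₁,…,αₙ ∈ ℂ be linearly independent over ℚ, H₀ = Σᵢ₌₁ⁿ αᵢ·pᵢqᵢ, and let H ∈ ℂ[[q,p]] satisfy H = H₀ + R₃ + o(3) where R₃ is a homogeneous polynomial of degree 3. Then there exists a homogeneous polynomial f₃ of degree 3 such that e^{ad_{f₃}}(H) = H₀ + o(3), where e^{ad_{f₃}}(H) = Σ_{j≥0}(1/j!)·ad_{f₃}^j(H) and ad_{f₃}(F) = {F, f₃}. -/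
/- ℂ[[q,p]] is `MvPowerSeries (Fin n ⊕ Fin n) ℂ`, where `Sum.inl i` is the
variable `qᵢ` and `Sum.inr i` is the variable `pᵢ`. -/

open MvPowerSeries

/-- Iterates of the adjoint operator `ad_f(F) = {F, f}`: `adIter f F k = ad_f^k(F)`. -/
noncomputable def adIter {n : ℕ} (f F : MvPowerSeries (Fin n ⊕ Fin n) ℂ) :
    ℕ → MvPowerSeries (Fin n ⊕ Fin n) ℂ
  | 0 => F
  | k + 1 => pois (adIter f F k) f

/-- The exponential `e^{ad_f}(F) = Σ_{k≥0} (1/k!) ad_f^k(F)`, defined coefficientwise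
(for each monomial only finitely many terms contribute when `f` has order ≥ 3,
so the finite sum `∑ᶠ` computes the genuine sum). -/
noncomputable def expAd {n : ℕ} (f F : MvPowerSeries (Fin n ⊕ Fin n) ℂ) :
    MvPowerSeries (Fin n ⊕ Fin n) ℂ :=
  fun m => ∑ᶠ k : ℕ, ((k.factorial : ℂ))⁻¹ * coeff (R := ℂ) m (adIter f F k)

/-- `f` is homogeneous of total degree `d`. -/
def IsHomog {σ : Type} (f : MvPowerSeries σ ℂ) (d : ℕ) : Prop :=
  ∀ m, mdeg m ≠ d → coeff (R := ℂ) m f = 0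

/-! In the coordinates `qᵢ, pᵢ` the operator `g ↦ {H₀, g}` is diagonal: it multiplies the monomial
`qᵃ pᵇ` by the small divisor `⟨α, b − a⟩`. By ℚ-independence of the `αᵢ` this vanishes only if
`a = b`, which forces even degree; so in degree 3 the homological equation `{H₀, f₃} = −R₃` is
solved by dividing coefficients. As `f₃` has order 3, each `ad_{f₃}` raises the order by one, hence
up to order 3 we get `e^{ad_{f₃}} H = H + {H, f₃} = (H₀ + R₃) + {H₀, f₃} = H₀`. -/

open Finsupp

section Order

variable {σ : Type} {f g : MvPowerSeries σ ℂ} {a b : ℕ}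

lemma mdeg_eq_degree (m : σ →₀ ℕ) : mdeg m = m.degree := rfl

lemma ordGe_iff_le_order : OrdGe f a ↔ (a : ℕ∞) ≤ f.order :=
  ⟨nat_le_order, fun h _ hm => coeff_of_lt_order ((Nat.cast_lt.mpr hm).trans_le h)⟩

lemma OrdGe.mono (h : OrdGe f a) (hba : b ≤ a) : OrdGe f b :=
  fun m hm => h m (hm.trans_le hba)

lemma OrdGe.add (hf : OrdGe f a) (hg : OrdGe g a) : OrdGe (f + g) a :=
  fun m hm => by rw [map_add, hf m hm, hg m hm, add_zero]

lemma OrdGe.mul (hf : OrdGe f a) (hg : OrdGe g b) : OrdGe (f * g) (a + b) := by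
  rw [ordGe_iff_le_order] at *
  push_cast
  exact (add_le_add hf hg).trans le_order_mul

lemma OrdGe.pderiv (x : σ) (h : OrdGe f a) : OrdGe (pderiv ℂ x f) (a - 1) := fun m hm => by
  rw [coeff_pderiv, h _ (by rw [mdeg_eq_degree, map_add, degree_single, ← mdeg_eq_degree]; omega),
    zero_mul]

lemma ordGe_X (x : σ) : OrdGe (X x : MvPowerSeries σ ℂ) 1 := fun m hm => by
  rw [(degree_eq_zero_iff m).mp (by rwa [mdeg_eq_degree, Nat.lt_one_iff] at hm), coeff_zero_X]

lemma IsHomog.ordGe {d : ℕ} (h : IsHomog f d) : OrdGe f d := fun m hm => h m hm.ne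

end Order

lemma pd_eq_pderiv {σ : Type} [DecidableEq σ] (x : σ) (f : MvPowerSeries σ ℂ) :
    pd x f = pderiv ℂ x f := by
  ext m
  rw [coeff_pderiv]
  exact mul_comm _ _

section Poisson

variable {n : ℕ} {f g F : MvPowerSeries (Fin n ⊕ Fin n) ℂ} {a b : ℕ}

lemma pois_eq_sum_pderiv (f g : MvPowerSeries (Fin n ⊕ Fin n) ℂ) :
    pois f g = ∑ i, (pderiv ℂ (Sum.inl i) f * pderiv ℂ (Sum.inr i) g -
      pderiv ℂ (Sum.inr i) f * pderiv ℂ (Sum.inl i) g) := by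
  simp only [pois, pd_eq_pderiv]

lemma pois_sub_left (f g h : MvPowerSeries (Fin n ⊕ Fin n) ℂ) :
    pois (f - g) h = pois f h - pois g h := by
  simp only [pois_eq_sum_pderiv, map_sub, ← Finset.sum_sub_distrib]
  congr! 1
  ring

lemma OrdGe.pois (hf : OrdGe f a) (hg : OrdGe g b) : OrdGe (pois f g) (a - 1 + (b - 1)) :=
  fun m hm => by
    rw [pois_eq_sum_pderiv, map_sum]
    refine Finset.sum_eq_zero fun i _ => ?_
    rw [map_sub, ((hf.pderiv _).mul (hg.pderiv _)) m hm, ((hf.pderiv _).mul (hg.pderiv _)) m hm,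
      sub_zero]

lemma OrdGe.adIter (hF : OrdGe F a) (hf : OrdGe f 3) (k : ℕ) : OrdGe (adIter f F k) (a + k) := by
  induction k with
  | zero => exact hF
  | succ k ih => exact (ih.pois hf).mono (by omega)

lemma coeff_expAd_eq_sum_range (hF : OrdGe F a) (hf : OrdGe f 3) {k : ℕ}
    {m : (Fin n ⊕ Fin n) →₀ ℕ} (hm : mdeg m < a + k) :
    coeff m (expAd f F) = ∑ j ∈ Finset.range k, (j.factorial : ℂ)⁻¹ * coeff m (adIter f F j) := by
  refine finsum_eq_sum_of_support_subset _ fun j hj => ?_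
  by_contra hjk
  rw [Finset.mem_coe, Finset.mem_range, not_lt] at hjk
  exact hj (mul_eq_zero_of_right _ ((hF.adIter hf j) m (by omega)))

end Poisson

lemma coeff_X_mul_pderiv {σ R : Type} [CommSemiring R] (x : σ) (g : MvPowerSeries σ R)
    (m : σ →₀ ℕ) : coeff m (X x * pderiv R x g) = m x * coeff m g := by
  rw [X, coeff_monomial_mul, one_mul]
  split_ifs with h
  · have hx : 1 ≤ m x := single_le_iff.mp h
    rw [coeff_pderiv, tsub_add_cancel_of_le h, tsub_apply, single_eq_same, ← Nat.cast_add_one,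
      Nat.sub_add_cancel hx, mul_comm]
  · rw [show m x = 0 by by_contra h0; exact h (single_le_iff.mpr (by omega)), Nat.cast_zero,
      zero_mul]

section Quadratic

variable {n : ℕ}

noncomputable def H₀ (α : Fin n → ℂ) : MvPowerSeries (Fin n ⊕ Fin n) ℂ :=
  ∑ i : Fin n, C (σ := Fin n ⊕ Fin n) (R := ℂ) (α i) * X (Sum.inr i) * X (Sum.inl i)

lemma pderiv_inl_H₀ (α : Fin n → ℂ) (i : Fin n) :
    pderiv ℂ (Sum.inl i) (H₀ α) = C (α i) * X (Sum.inr i) := by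
  classical
  simp [H₀, Derivation.leibniz, pderiv_X, Pi.single_apply]

lemma pderiv_inr_H₀ (α : Fin n → ℂ) (i : Fin n) :
    pderiv ℂ (Sum.inr i) (H₀ α) = C (α i) * X (Sum.inl i) := by
  classical
  simpa [H₀, Derivation.leibniz, pderiv_X, Pi.single_apply] using mul_comm _ _

lemma ordGe_H₀ (α : Fin n → ℂ) : OrdGe (H₀ α) 2 := fun m hm => by
  rw [H₀, map_sum]
  refine Finset.sum_eq_zero fun i _ => ?_
  rw [mul_assoc, coeff_C_mul, ((ordGe_X _).mul (ordGe_X _)) m hm, mul_zero]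

noncomputable def smallDivisor (α : Fin n → ℂ) (m : (Fin n ⊕ Fin n) →₀ ℕ) : ℂ :=
  ∑ i, α i * ((m (Sum.inr i) : ℂ) - m (Sum.inl i))

lemma coeff_pois_H₀ (α : Fin n → ℂ) (g : MvPowerSeries (Fin n ⊕ Fin n) ℂ)
    (m : (Fin n ⊕ Fin n) →₀ ℕ) :
    coeff m (pois (H₀ α) g) = smallDivisor α m * coeff m g := by
  simp only [pois_eq_sum_pderiv, pderiv_inl_H₀, pderiv_inr_H₀, mul_assoc, map_sum, map_sub,
    coeff_C_mul, coeff_X_mul_pderiv, smallDivisor, Finset.sum_mul]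
  congr! 1
  ring

lemma even_mdeg_of_smallDivisor_eq_zero {α : Fin n → ℂ} (hα : LinearIndependent ℚ α)
    {m : (Fin n ⊕ Fin n) →₀ ℕ} (h : smallDivisor α m = 0) : Even (mdeg m) := by
  have hbal : ∀ i, m (Sum.inr i) = m (Sum.inl i) := by
    intro i
    have := Fintype.linearIndependent_iff.mp hα
      (fun i => (m (Sum.inr i) : ℚ) - m (Sum.inl i))
      (by simpa [smallDivisor, Rat.smul_def, mul_comm] using h) i
    exact_mod_cast sub_eq_zero.mp this
  rw [mdeg_eq_degree, degree_eq_sum, Fintype.sum_sum_type]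
  simp only [hbal]
  exact Even.add_self _

/-- At resonant monomials the division is by `0` and returns `0`. -/
noncomputable def homologicalSolution (α : Fin n → ℂ) (R : MvPowerSeries (Fin n ⊕ Fin n) ℂ) :
    MvPowerSeries (Fin n ⊕ Fin n) ℂ :=
  fun m => -coeff m R / smallDivisor α m

lemma isHomog_homologicalSolution (α : Fin n → ℂ) {R : MvPowerSeries (Fin n ⊕ Fin n) ℂ} {d : ℕ}
    (hR : IsHomog R d) : IsHomog (homologicalSolution α R) d := fun m hm => by
  simp only [homologicalSolution, coeff_apply, hR m hm, neg_zero, zero_div]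

lemma pois_H₀_homologicalSolution {α : Fin n → ℂ} (hα : LinearIndependent ℚ α)
    {R : MvPowerSeries (Fin n ⊕ Fin n) ℂ} {d : ℕ} (hR : IsHomog R d) (hd : Odd d) :
    pois (H₀ α) (homologicalSolution α R) = -R := by
  ext m
  rw [coeff_pois_H₀, map_neg]
  by_cases h : smallDivisor α m = 0
  · rw [h, zero_mul, hR m fun hmd => Nat.not_even_iff_odd.mpr hd
      (hmd ▸ even_mdeg_of_smallDivisor_eq_zero hα h), neg_zero]
  · exact mul_div_cancel₀ _ h

end Quadratic

/-- **First normalization step.** If `H = H₀ + R₃ + o(3)` with `H₀ = Σᵢ αᵢ pᵢqᵢ`,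
`α₁,…,αₙ` linearly independent over ℚ and `R₃` homogeneous of degree 3, then there
is a homogeneous polynomial `f₃` of degree 3 with `e^{ad_{f₃}}(H) = H₀ + o(3)`. -/
theorem first_normalization_step (n : ℕ) (α : Fin n → ℂ)
    (hα : LinearIndependent ℚ α)
    (H R₃ : MvPowerSeries (Fin n ⊕ Fin n) ℂ)
    (hR : IsHomog R₃ 3)
    (hH : OEq H ((∑ i : Fin n, C (σ := Fin n ⊕ Fin n) (R := ℂ) (α i) *
      X (Sum.inr i) * X (Sum.inl i)) + R₃) 3) :
    ∃ f₃ : MvPowerSeries (Fin n ⊕ Fin n) ℂ, IsHomog f₃ 3 ∧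
      OEq (expAd f₃ H)
        (∑ i : Fin n, C (σ := Fin n ⊕ Fin n) (R := ℂ) (α i) * X (Sum.inr i) * X (Sum.inl i)) 3 := by
  change OEq H (H₀ α + R₃) 3 at hH
  change ∃ f₃, IsHomog f₃ 3 ∧ OEq (expAd f₃ H) (H₀ α) 3
  have hrem : OrdGe (H - (H₀ α + R₃)) 4 := fun m hm => hH m (by omega)
  have hcubic : OrdGe (H - H₀ α) 3 := by
    rw [show H - H₀ α = H - (H₀ α + R₃) + R₃ by ring]
    exact (hrem.mono (by norm_num)).add hR.ordGe
  have hquad : OrdGe H 2 := by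
    rw [← sub_add_cancel H (H₀ α)]
    exact (hcubic.mono (by norm_num)).add (ordGe_H₀ α)
  set f₃ := homologicalSolution α R₃
  have hf₃ : IsHomog f₃ 3 := isHomog_homologicalSolution α hR
  have hsol : pois (H₀ α) f₃ = -R₃ := pois_H₀_homologicalSolution hα hR (by decide)
  refine ⟨f₃, hf₃, fun m hm => ?_⟩
  calc coeff m (expAd f₃ H - H₀ α)
      = coeff m (H - (H₀ α + R₃)) + coeff m (pois (H - H₀ α) f₃) +
          coeff m (pois (H₀ α) f₃ + R₃) := by
        rw [map_sub, coeff_expAd_eq_sum_range hquad hf₃.ordGe (k := 2) (by omega)]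
        simp only [Finset.sum_range_succ, Finset.range_zero, Finset.sum_empty, adIter,
          Nat.factorial_zero, Nat.factorial_one, Nat.cast_one, inv_one, one_mul, pois_sub_left,
          map_add, map_sub]
        ring
    _ = 0 := by
        rw [hrem m (by omega), (hcubic.pois hf₃.ordGe) m (by omega), hsol, neg_add_cancel,
          map_zero, add_zero, add_zero]
end
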